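/- arXiv:1810.01481 — 4 statements merged into one kernel-verified Lean document; each statement's English description precedes it below -/
import Mathlib

section
/- The tolerable solution set Ξ_tol(𝐀, 𝐛) of an interval system of linear equations is a convex subset of ℝⁿ. -/
open Matrix

/-- The tolerable solution set of an interval linear system. -/
def Xtol {m n : ℕ} (Alo Ahi : Matrix (Fin m) (Fin n) ℝ) (blo bhi : Fin m → ℝ) :
    Set (Fin n → ℝ) :=
  {x | ∀ A : Matrix (Fin m) (Fin n) ℝ,
    (∀ i j, Alo i j ≤ A i j ∧ A i j ≤ Ahi i j) →
    ∀ i, blo i ≤ A.mulVec x i ∧ A.mulVec x i ≤ bhi i}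

/-- The tolerable solution set is convex. -/
theorem stmt_4 {m n : ℕ} (Alo Ahi : Matrix (Fin m) (Fin n) ℝ)
    (blo bhi : Fin m → ℝ) :
    Convex ℝ (Xtol Alo Ahi blo bhi) := by
  intro x hx y hy a b ha hb hab A hA i
  have hx' := hx A hA i
  have hy' := hy A hA i
  have h : A.mulVec (a • x + b • y) i = a * A.mulVec x i + b * A.mulVec y i := by
    rw [Matrix.mulVec_add, Matrix.mulVec_smul, Matrix.mulVec_smul]
    simp [smul_eq_mul]
  rw [h]
  constructor
  · calc blo i = a * blo i + b * blo i := by rw [← add_mul, hab, one_mul]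
      _ ≤ a * A.mulVec x i + b * A.mulVec y i :=
        add_le_add (mul_le_mul_of_nonneg_left hx'.1 ha) (mul_le_mul_of_nonneg_left hy'.1 hb)
  · calc a * A.mulVec x i + b * A.mulVec y i
        ≤ a * bhi i + b * bhi i :=
        add_le_add (mul_le_mul_of_nonneg_left hx'.2 ha) (mul_le_mul_of_nonneg_left hy'.2 hb)
      _ = bhi i := by rw [← add_mul, hab, one_mul]
end

section
/- (Rohn's theorem) A point x ∈ ℝⁿ belongs to the tolerable solution set of the interval m×n linear system 𝐀x = 𝐛 if and only if x = x′ − x″ for some nonnegative vectors x′, x″ ∈ ℝⁿ satisfying Āx′ − A̲x″ ≤ b̄ and −A̲x′ + Āx″ ≤ −b̲. -/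
open Matrix

/-- Rohn's theorem: `x ∈ Ξ_tol(𝐀,𝐛)` iff `x = x′ − x″` for some nonnegative
`x′, x″` with `Ā x′ − A̲ x″ ≤ b̄` and `−A̲ x′ + Ā x″ ≤ −b̲`. -/
theorem stmt_9 {m n : ℕ} (Alo Ahi : Matrix (Fin m) (Fin n) ℝ)
    (blo bhi : Fin m → ℝ) (hA : ∀ i j, Alo i j ≤ Ahi i j) (hb : ∀ i, blo i ≤ bhi i)
    (x : Fin n → ℝ) :
    x ∈ Xtol Alo Ahi blo bhi ↔
      ∃ x' x'' : Fin n → ℝ, 0 ≤ x' ∧ 0 ≤ x'' ∧ x = x' - x'' ∧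
        Ahi.mulVec x' - Alo.mulVec x'' ≤ bhi ∧
        -(Alo.mulVec x') + Ahi.mulVec x'' ≤ -blo := by
  constructor
  · intro hx
    set x' : Fin n → ℝ := fun j => max (x j) 0 with hx'
    set x'' : Fin n → ℝ := fun j => max (-(x j)) 0 with hx''
    refine ⟨x', x'', ?_, ?_, ?_, ?_, ?_⟩
    · intro j; exact le_max_right _ _
    · intro j; exact le_max_right _ _
    · funext j
      simp only [Pi.sub_apply, hx', hx'']
      rcases le_total 0 (x j) with h | h
      · rw [max_eq_left h, max_eq_right (by linarith)]; ring
      · rw [max_eq_right h, max_eq_left (by linarith)]; ring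
    · -- use Amax
      set A : Matrix (Fin m) (Fin n) ℝ :=
        fun i j => if 0 ≤ x j then Ahi i j else Alo i j with hAdef
      have hmem : ∀ i j, Alo i j ≤ A i j ∧ A i j ≤ Ahi i j := by
        intro i j; simp only [hAdef]
        split <;> exact ⟨by first | exact le_refl _ | exact hA i j,
          by first | exact le_refl _ | exact hA i j⟩
      have key : ∀ i, Ahi.mulVec x' i - Alo.mulVec x'' i = A.mulVec x i := by
        intro i
        simp only [mulVec, dotProduct, ← Finset.sum_sub_distrib]
        refine Finset.sum_congr rfl fun j _ => ?_
        simp only [hx', hx'', hAdef]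
        by_cases h : 0 ≤ x j
        · rw [if_pos h, max_eq_left h, max_eq_right (by linarith)]; ring
        · push_neg at h
          rw [if_neg (not_le.mpr h), max_eq_right h.le, max_eq_left (by linarith)]
          ring
      intro i
      have := (hx A hmem i).2
      simpa [key i] using this
    · -- use Amin
      set A : Matrix (Fin m) (Fin n) ℝ :=
        fun i j => if 0 ≤ x j then Alo i j else Ahi i j with hAdef
      have hmem : ∀ i j, Alo i j ≤ A i j ∧ A i j ≤ Ahi i j := by
        intro i j; simp only [hAdef]
        split <;> exact ⟨by first | exact le_refl _ | exact hA i j,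
          by first | exact le_refl _ | exact hA i j⟩
      have key : ∀ i, -(Alo.mulVec x' i) + Ahi.mulVec x'' i = -(A.mulVec x i) := by
        intro i
        simp only [mulVec, dotProduct, ← Finset.sum_neg_distrib, ← Finset.sum_add_distrib]
        refine Finset.sum_congr rfl fun j _ => ?_
        simp only [hx', hx'', hAdef]
        by_cases h : 0 ≤ x j
        · rw [if_pos h, max_eq_left h, max_eq_right (by linarith)]; ring
        · push_neg at h
          rw [if_neg (not_le.mpr h), max_eq_right h.le, max_eq_left (by linarith)]
          ring
      intro i
      have := (hx A hmem i).1
      simp only [Pi.neg_apply, Pi.add_apply]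
      rw [key i]
      linarith
  · rintro ⟨x', x'', hp, hq, rfl, h1, h2⟩
    intro A hmem i
    have hup : A.mulVec (x' - x'') i ≤ Ahi.mulVec x' i - Alo.mulVec x'' i := by
      simp only [mulVec, dotProduct, Matrix.sub_mulVec, ← Finset.sum_sub_distrib,
        Pi.sub_apply]
      refine Finset.sum_le_sum fun j _ => ?_
      have := hmem i j
      have h1' := mul_le_mul_of_nonneg_right this.2 (hp j)
      have h2' := mul_le_mul_of_nonneg_right this.1 (hq j)
      nlinarith
    have hlo : Alo.mulVec x' i - Ahi.mulVec x'' i ≤ A.mulVec (x' - x'') i := by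
      simp only [mulVec, dotProduct, ← Finset.sum_sub_distrib, Pi.sub_apply]
      refine Finset.sum_le_sum fun j _ => ?_
      have := hmem i j
      have h1' := mul_le_mul_of_nonneg_right this.1 (hp j)
      have h2' := mul_le_mul_of_nonneg_right this.2 (hq j)
      nlinarith
    have hb1 := h1 i
    have hb2 := h2 i
    simp only [Pi.sub_apply, Pi.neg_apply, Pi.add_apply] at hb1 hb2
    constructor <;> linarith
end

section
/- (Sharaya's theorem) The tolerable solution set of an interval system 𝐀x = 𝐛 equals the intersection over rows i and over all vertex vectors a of the i-th interval row 𝐀_{i:} (i.e., vectors a with a_j ∈ {A̲_ij, Ā_ij}) of the hyperstrips { x ∈ ℝⁿ : b̲_i ≤ a·x ≤ b̄_i }. -/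
open Matrix

/-- The set of vertex vectors of the `i`-th interval row. -/
def vertRow {m n : ℕ} (Alo Ahi : Matrix (Fin m) (Fin n) ℝ) (i : Fin m) :
    Set (Fin n → ℝ) :=
  {a | ∀ j, a j = Alo i j ∨ a j = Ahi i j}

/-- Sharaya's theorem: the tolerable solution set is the intersection, over all
rows `i` and all vertex vectors `a` of the `i`-th interval row, of the
hyperstrips `{x : b̲_i ≤ a·x ≤ b̄_i}`. -/
theorem stmt_10 {m n : ℕ} (Alo Ahi : Matrix (Fin m) (Fin n) ℝ)
    (blo bhi : Fin m → ℝ) (hA : ∀ i j, Alo i j ≤ Ahi i j) :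
    Xtol Alo Ahi blo bhi =
      ⋂ i : Fin m, ⋂ a ∈ vertRow Alo Ahi i,
        {x : Fin n → ℝ | blo i ≤ a ⬝ᵥ x ∧ a ⬝ᵥ x ≤ bhi i} := by
  ext x
  simp only [Set.mem_iInter, Set.mem_setOf_eq, Xtol, vertRow]
  constructor
  · intro hx i a ha
    set A : Matrix (Fin m) (Fin n) ℝ := fun k j => if k = i then a j else Alo k j with hAdef
    have hb : ∀ k j, Alo k j ≤ A k j ∧ A k j ≤ Ahi k j := by
      intro k j
      by_cases h : k = i
      · subst h
        rcases ha j with h' | h' <;> simp [hAdef, h'] <;> [exact hA k j; exact hA k j]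
      · simp [hAdef, h, hA k j]
    have := hx A hb i
    have hrow : A.mulVec x i = a ⬝ᵥ x := by
      simp [Matrix.mulVec, hAdef]
    rwa [hrow] at this
  · intro hx A hb i
    have key : ∀ (s : Fin n → Bool),
        (fun j => if s j then Ahi i j else Alo i j) ∈
          {a : Fin n → ℝ | ∀ j, a j = Alo i j ∨ a j = Ahi i j} := by
      intro s j
      by_cases h : s j <;> simp [h]
    constructor
    · have h1 := (hx i (fun j => if 0 ≤ x j then Alo i j else Ahi i j)
        (fun j => by by_cases h : 0 ≤ x j <;> simp [h])).1
      refine h1.trans ?_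
      unfold dotProduct Matrix.mulVec dotProduct
      refine Finset.sum_le_sum fun j _ => ?_
      by_cases h : 0 ≤ x j
      · simp only [h, if_true]
        exact mul_le_mul_of_nonneg_right (hb i j).1 h
      · simp only [h, if_false]
        exact mul_le_mul_of_nonpos_right (hb i j).2 (le_of_not_ge h)
    · have h1 := (hx i (fun j => if 0 ≤ x j then Ahi i j else Alo i j)
        (fun j => by by_cases h : 0 ≤ x j <;> simp [h])).2
      refine le_trans ?_ h1
      unfold dotProduct Matrix.mulVec dotProduct
      refine Finset.sum_le_sum fun j _ => ?_
      by_cases h : 0 ≤ x j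
      · simp only [h, if_true]
        exact mul_le_mul_of_nonneg_right (hb i j).2 h
      · simp only [h, if_false]
        exact mul_le_mul_of_nonpos_right (hb i j).1 (le_of_not_ge h)
end

section
/- Let rad 𝐛_i = (b̄_i − b̲_i)/2, mid 𝐛_i = (b̄_i + b̲_i)/2, let Σ_j 𝐚_ij x_j denote the interval evaluation (each 𝐚_ij x_j = [min(A̲_ij x_j, Ā_ij x_j), max(A̲_ij x_j, Ā_ij x_j)]), and for an interval [u,v] let mag [u,v] = max(|u|,|v|). Then a point x belongs to Ξ_tol(𝐀,𝐛) if and only if Tol(x, 𝐀, 𝐛) = min_i { rad 𝐛_i − mag( mid 𝐛_i − Σ_j 𝐚_ij x_j ) } ≥ 0. -/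
open Matrix Finset

/-- The recognizing functional: `Tol(x) = min_i (rad 𝐛_i − mag(mid 𝐛_i − Σ_j 𝐚_ij x_j))`,
where the interval `Σ_j 𝐚_ij x_j` has endpoints `Σ_j min(A̲_ij x_j, Ā_ij x_j)`
and `Σ_j max(A̲_ij x_j, Ā_ij x_j)`, and `mag [u,v] = max (|u|) (|v|)`. -/
noncomputable def Tol {m n : ℕ} (Alo Ahi : Matrix (Fin m) (Fin n) ℝ)
    (blo bhi : Fin m → ℝ) (x : Fin n → ℝ) : ℝ :=
  ⨅ i : Fin m,
    ((bhi i - blo i) / 2 -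
      max |(bhi i + blo i) / 2 - ∑ j, min (Alo i j * x j) (Ahi i j * x j)|
          |(bhi i + blo i) / 2 - ∑ j, max (Alo i j * x j) (Ahi i j * x j)|)

/-- A point belongs to the tolerable solution set iff the recognizing
functional is nonnegative at it. -/
theorem stmt_12 {m n : ℕ} (Alo Ahi : Matrix (Fin m) (Fin n) ℝ)
    (blo bhi : Fin m → ℝ) (hA : ∀ i j, Alo i j ≤ Ahi i j) (hb : ∀ i, blo i ≤ bhi i)
    (x : Fin n → ℝ) :
    x ∈ Xtol Alo Ahi blo bhi ↔ 0 ≤ Tol Alo Ahi blo bhi x := by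
  set lo : Fin m → ℝ := fun i => ∑ j, min (Alo i j * x j) (Ahi i j * x j) with hlo
  set hi : Fin m → ℝ := fun i => ∑ j, max (Alo i j * x j) (Ahi i j * x j) with hhi
  set f : Fin m → ℝ := fun i =>
    ((bhi i - blo i) / 2 -
      max |(bhi i + blo i) / 2 - lo i| |(bhi i + blo i) / 2 - hi i|) with hf
  have hTol : Tol Alo Ahi blo bhi x = ⨅ i, f i := rfl
  constructor
  · intro hx
    rw [hTol]
    apply Real.iInf_nonneg
    intro i
    -- matrices achieving the endpoints
    set Amin : Matrix (Fin m) (Fin n) ℝ := fun i j =>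
      if Alo i j * x j ≤ Ahi i j * x j then Alo i j else Ahi i j with hAmin
    set Amax : Matrix (Fin m) (Fin n) ℝ := fun i j =>
      if Alo i j * x j ≤ Ahi i j * x j then Ahi i j else Alo i j with hAmax
    have hminb : ∀ i j, Alo i j ≤ Amin i j ∧ Amin i j ≤ Ahi i j := by
      intro i j; simp only [hAmin]; split
      exacts [⟨le_rfl, hA i j⟩, ⟨hA i j, le_rfl⟩]
    have hmaxb : ∀ i j, Alo i j ≤ Amax i j ∧ Amax i j ≤ Ahi i j := by
      intro i j; simp only [hAmax]; split
      exacts [⟨hA i j, le_rfl⟩, ⟨le_rfl, hA i j⟩]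
    have hminv : Amin.mulVec x i = lo i := by
      simp only [Matrix.mulVec, dotProduct, hlo, hAmin]
      refine Finset.sum_congr rfl fun j _ => ?_
      rw [min_def]; split <;> rfl
    have hmaxv : Amax.mulVec x i = hi i := by
      simp only [Matrix.mulVec, dotProduct, hhi, hAmax]
      refine Finset.sum_congr rfl fun j _ => ?_
      rw [max_def]; split <;> rfl
    obtain ⟨h1, h2⟩ := hx Amin hminb i
    obtain ⟨h3, h4⟩ := hx Amax hmaxb i
    rw [hminv] at h1 h2
    rw [hmaxv] at h3 h4
    have : max |(bhi i + blo i) / 2 - lo i| |(bhi i + blo i) / 2 - hi i|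
        ≤ (bhi i - blo i) / 2 := by
      apply max_le <;> rw [abs_le] <;> constructor <;> linarith
    simp only [hf]; linarith
  · intro h A hAb i
    have hbdd : BddBelow (Set.range f) := (Set.finite_range f).bddBelow
    have hfi : (0:ℝ) ≤ f i := le_trans (hTol ▸ h) (ciInf_le hbdd i)
    have hm : max |(bhi i + blo i) / 2 - lo i| |(bhi i + blo i) / 2 - hi i|
        ≤ (bhi i - blo i) / 2 := by simp only [hf] at hfi; linarith
    have h1 : |(bhi i + blo i) / 2 - lo i| ≤ (bhi i - blo i) / 2 :=
      le_trans (le_max_left _ _) hm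
    have h2 : |(bhi i + blo i) / 2 - hi i| ≤ (bhi i - blo i) / 2 :=
      le_trans (le_max_right _ _) hm
    rw [abs_le] at h1 h2
    have hlow : lo i ≤ A.mulVec x i := by
      simp only [Matrix.mulVec, dotProduct, hlo]
      refine Finset.sum_le_sum fun j _ => ?_
      obtain ⟨ha, hb'⟩ := hAb i j
      rcases le_total 0 (x j) with hx0 | hx0
      · exact le_trans (min_le_left _ _) (mul_le_mul_of_nonneg_right ha hx0)
      · exact le_trans (min_le_right _ _) (mul_le_mul_of_nonpos_right hb' hx0)
    have hhigh : A.mulVec x i ≤ hi i := by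
      simp only [Matrix.mulVec, dotProduct, hhi]
      refine Finset.sum_le_sum fun j _ => ?_
      obtain ⟨ha, hb'⟩ := hAb i j
      rcases le_total 0 (x j) with hx0 | hx0
      · exact le_trans (mul_le_mul_of_nonneg_right hb' hx0) (le_max_right _ _)
      · exact le_trans (mul_le_mul_of_nonpos_right ha hx0) (le_max_left _ _)
    constructor <;> linarith
end
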